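/- Let A be a binary linear code of even length n and dimension K, and let a ∉ A. With Bᵢ the number of weight-i words in A⊥, bᵢ the number of weight-i words in A⊥ orthogonal to a, d_{n/2} the number of balanced words in A + a, and B(A) the number of balanced words in A, one has B(A) - d_{n/2} = 2^{K-n+1} Σᵢ (Bᵢ - bᵢ) K(i,n), where K(i,n) = Σⱼ (-1)^j C(i,j) C(n-i, n/2-j). -/

import Mathlib

/-- Hamming weight of a vector in F₂ⁿ. -/
def wt {n : ℕ} (v : Fin n → ZMod 2) : ℕ :=
  (Finset.univ.filter fun j => v j ≠ 0).card

/-- Dual code: vectors orthogonal to every codeword. -/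
def dualSet {n : ℕ} (A : Submodule (ZMod 2) (Fin n → ZMod 2)) : Set (Fin n → ZMod 2) :=
  {u | ∀ c ∈ A, ∑ j, u j * c j = 0}

/-- Krawtchouk value K(i,n). -/
def Kw (i n : ℕ) : ℤ :=
  ∑ j ∈ Finset.range (i + 1),
    if j ≤ n / 2 then (-1 : ℤ) ^ j * (i.choose j) * ((n - i).choose (n / 2 - j)) else 0

/-!
Let `χ x = (-1)^x` and let `D = A⊥`, of size `2^(n-K)`. Character orthogonality on `D`, together
with `D⊥ = A`, gives `∑_{u ∈ D} χ(u·v) = |D|·[v ∈ A]`. Since `1 - χ(u·a) = 2·[u·a = 1]`,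
`|D|·([v ∈ A] - [v + a ∈ A]) = ∑_{u ∈ D} χ(u·v)(1 - χ(u·a)) = 2 ∑_{u ∈ D, u·a = 1} χ(u·v)`.
Summing over the balanced words `v`, the left side becomes `|D|·(B(A) - d_{n/2})`, while
`∑_{wt v = n/2} χ(u·v) = K(wt u, n)` (count the balanced `v` meeting the support of `u` in `j`
places), and grouping the `u` by weight turns the right side into `2 ∑ᵢ (Bᵢ - bᵢ) K(i, n)`.
-/

open Finset Matrix

theorem Matrix.nondegenerate_dotProductBilin {K ι : Type*} [Field K] [Fintype ι] :
    (dotProductBilin K K : LinearMap.BilinForm K (ι → K)).Nondegenerate :=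
  ⟨fun x hx => dotProduct_eq_zero x hx,
    fun y hy => dotProduct_eq_zero y fun x => by simpa [dotProduct_comm] using hy x⟩

namespace Submodule

variable {K ι : Type*} [Field K] [Fintype ι]

def dualCode (A : Submodule K (ι → K)) : Submodule K (ι → K) :=
  LinearMap.BilinForm.orthogonal (dotProductBilin K K) A

variable (A : Submodule K (ι → K))

theorem mem_dualCode {u : ι → K} : u ∈ A.dualCode ↔ ∀ c ∈ A, c ⬝ᵥ u = 0 := Iff.rfl

theorem finrank_dualCode :
    Module.finrank K A.dualCode = Fintype.card ι - Module.finrank K A := by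
  rw [dualCode, LinearMap.BilinForm.finrank_orthogonal nondegenerate_dotProductBilin,
    Module.finrank_fintype_fun_eq_card]

theorem dualCode_dualCode : A.dualCode.dualCode = A :=
  LinearMap.BilinForm.orthogonal_orthogonal nondegenerate_dotProductBilin
    (fun x y h => by simpa [dotProduct_comm] using h) A

end Submodule

theorem mem_dualSet_iff {n : ℕ} {A : Submodule (ZMod 2) (Fin n → ZMod 2)} {u : Fin n → ZMod 2} :
    u ∈ dualSet A ↔ u ∈ A.dualCode := by
  rw [A.mem_dualCode]
  exact forall₂_congr fun c _ => by rw [dotProduct_comm]; rfl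

theorem AddChar.sum_dotProduct_submodule {K ι R : Type*} [Field K] [Fintype K] [Fintype ι]
    [CommRing R] [IsDomain R] {χ : AddChar K R} (hχ : χ ≠ 0) (D : Submodule K (ι → K))
    [Fintype D] [DecidablePred (· ∈ D.dualCode)] (v : ι → K) :
    ∑ u : D, χ ((u : ι → K) ⬝ᵥ v) = if v ∈ D.dualCode then (Fintype.card D : R) else 0 := by
  let ψ : AddChar D R := χ.compAddMonoidHom
    ((dotProductBilin K K).flip v ∘ₗ D.subtype).toAddMonoidHom
  have hψ : ψ = 0 ↔ v ∈ D.dualCode := by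
    refine ⟨fun h => D.mem_dualCode.2 fun u hu => ?_, fun h => ?_⟩
    · by_contra hne
      -- rescaling `u` makes `u ⬝ᵥ v` take every value, so `ψ = 0` would force `χ = 0`
      refine hχ (AddChar.ext _ _ fun x => ?_)
      have := congr($h ⟨(x / (u ⬝ᵥ v)) • u, D.smul_mem _ hu⟩)
      simpa [ψ, smul_dotProduct, div_mul_cancel₀ x hne] using this
    · ext u
      simp [ψ, D.mem_dualCode.1 h u u.2]
  classical
  change ∑ u, ψ u = _
  rw [AddChar.sum_eq_ite ψ]
  exact if_congr hψ rfl rfl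

theorem AddChar.sum_dotProduct_dualCode {K ι R : Type*} [Field K] [Fintype K] [Fintype ι]
    [CommRing R] [IsDomain R] {χ : AddChar K R} (hχ : χ ≠ 0) (A : Submodule K (ι → K))
    [Fintype A.dualCode] [DecidablePred (· ∈ A)] (v : ι → K) :
    ∑ u : A.dualCode, χ ((u : ι → K) ⬝ᵥ v) =
      if v ∈ A then (Fintype.card K : R) ^ (Fintype.card ι - Module.finrank K A) else 0 := by
  classical
  rw [sum_dotProduct_submodule hχ, Module.card_eq_pow_finrank (K := K), A.finrank_dualCode]
  simp only [A.dualCode_dualCode, Nat.cast_pow]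

theorem AddChar.map_sum_eq_prod {A M ι : Type*} [AddCommMonoid A] [CommMonoid M]
    (ψ : AddChar A M) (s : Finset ι) (f : ι → A) : ψ (∑ i ∈ s, f i) = ∏ i ∈ s, ψ (f i) := by
  simpa [← ofAdd_sum] using map_prod ψ.toMonoidHom (fun i => Multiplicative.ofAdd (f i)) s

def signChar : AddChar (ZMod 2) ℤ := AddChar.zmodChar 2 (by norm_num : (-1 : ℤ) ^ 2 = 1)

theorem signChar_apply (x : ZMod 2) : signChar x = if x = 0 then 1 else -1 := by
  fin_cases x <;> rfl

theorem signChar_ne_zero : signChar ≠ 0 := fun h => by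
  simpa [signChar_apply] using congr($h 1)

section BinaryCode

variable {ι : Type*} [Fintype ι]

theorem signChar_dotProduct [DecidableEq ι] (u v : ι → ZMod 2) :
    signChar (u ⬝ᵥ v) = (-1) ^ #(({i | v i ≠ 0} : Finset ι) ∩ ({i | u i ≠ 0} : Finset ι)) := by
  rw [dotProduct, AddChar.map_sum_eq_prod]
  simp only [signChar_apply, prod_ite, prod_const_one, one_mul, prod_const]
  congr 2
  ext i
  simp [and_comm]

theorem two_mul_sum_signChar_filter_dotProduct_ne_zero (s : Finset (ι → ZMod 2))
    (a v : ι → ZMod 2) :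
    2 * ∑ u ∈ s with u ⬝ᵥ a ≠ 0, signChar (u ⬝ᵥ v) =
      ∑ u ∈ s, signChar (u ⬝ᵥ v) - ∑ u ∈ s, signChar (u ⬝ᵥ (v + a)) := by
  simp only [dotProduct_add, AddChar.map_add_eq_mul, ← sum_sub_distrib, ← mul_one_sub,
    signChar_apply, mul_sum, sum_filter]
  refine sum_congr rfl fun u _ => ?_
  by_cases u ⬝ᵥ a = 0 <;> simp [*]

open scoped Classical in
theorem two_pow_mul_card_filter_sub_card_filter [DecidableEq ι]
    (A : Submodule (ZMod 2) (ι → ZMod 2)) (a : ι → ZMod 2) (s : Finset (ι → ZMod 2)) :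
    (2 : ℤ) ^ (Fintype.card ι - Module.finrank (ZMod 2) A) *
        (#{v ∈ s | v ∈ A} - #{v ∈ s | v + a ∈ A}) =
      2 * ∑ u with u ∈ A.dualCode ∧ u ⬝ᵥ a ≠ 0, ∑ v ∈ s, signChar (u ⬝ᵥ v) := by
  set c : ℤ := 2 ^ (Fintype.card ι - Module.finrank (ZMod 2) A)
  have dual_sum (w) : ∑ u with u ∈ A.dualCode, signChar (u ⬝ᵥ w) = if w ∈ A then c else 0 := by
    rw [sum_subtype _ fun u => mem_filter_univ u,
      AddChar.sum_dotProduct_dualCode signChar_ne_zero, ZMod.card]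
    push_cast
    rfl
  calc c * (#{v ∈ s | v ∈ A} - #{v ∈ s | v + a ∈ A})
      = ∑ v ∈ s, ((if v ∈ A then c else 0) - if v + a ∈ A then c else 0) := by
        simp only [card_filter, Nat.cast_sum, Nat.cast_ite, Nat.cast_one, Nat.cast_zero, mul_sub,
          mul_sum, mul_ite, mul_one, mul_zero, sum_sub_distrib]
    _ = ∑ v ∈ s, 2 * ∑ u with u ∈ A.dualCode ∧ u ⬝ᵥ a ≠ 0, signChar (u ⬝ᵥ v) := by
        simp only [← filter_filter, two_mul_sum_signChar_filter_dotProduct_ne_zero, dual_sum]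
    _ = _ := by rw [← mul_sum, sum_comm]

end BinaryCode

theorem Finset.card_filter_powersetCard_card_inter {α : Type*} [Fintype α] [DecidableEq α]
    (S : Finset α) {m j : ℕ} (hj : j ≤ m) :
    #{T ∈ powersetCard m univ | #(T ∩ S) = j} =
      (#S).choose j * (Fintype.card α - #S).choose (m - j) := by
  rw [← card_compl, ← card_powersetCard, ← card_powersetCard, ← card_product]
  have split_inter : ∀ {P Q : Finset α}, P ⊆ S → Disjoint Q S → (P ∪ Q) ∩ S = P :=
    fun hPS hQS => by
      rw [union_inter_distrib_right, inter_eq_left.2 hPS, disjoint_iff_inter_eq_empty.1 hQS,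
        union_empty]
  refine card_bij' (fun T _ => (T ∩ S, T \ S)) (fun P _ => P.1 ∪ P.2) ?_ ?_ ?_ ?_
  · intro T hT
    simp only [mem_filter, mem_powersetCard, subset_univ, true_and] at hT
    simp only [mem_product, mem_powersetCard]
    refine ⟨⟨inter_subset_right, hT.2⟩, fun x hx => by simp_all, ?_⟩
    have := card_inter_add_card_sdiff T S
    omega
  · rintro ⟨P, Q⟩ h
    simp only [mem_product, mem_powersetCard, subset_compl_iff_disjoint_right] at h
    obtain ⟨⟨hPS, rfl⟩, hQS, hQ⟩ := h
    simp only [mem_filter, mem_powersetCard, subset_univ, true_and, split_inter hPS hQS, and_true]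
    rw [card_union_of_disjoint (disjoint_of_subset_left hPS hQS.symm)]
    omega
  · intro T _
    exact (union_comm _ _).trans (sdiff_union_inter T S)
  · rintro ⟨P, Q⟩ h
    simp only [mem_product, mem_powersetCard, subset_compl_iff_disjoint_right] at h
    obtain ⟨⟨hPS, -⟩, hQS, -⟩ := h
    rw [split_inter hPS hQS, union_sdiff_distrib, sdiff_eq_empty_iff_subset.2 hPS,
      hQS.sdiff_eq_left, empty_union]

-- The guard `j ≤ m` is needed because `m - j` truncates in `ℕ`.
theorem Finset.sum_powersetCard_neg_one_pow_card_inter {α : Type*} [Fintype α] [DecidableEq α]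
    (S : Finset α) (m : ℕ) :
    ∑ T ∈ powersetCard m univ, (-1 : ℤ) ^ #(T ∩ S) =
      ∑ j ∈ range (#S + 1),
        if j ≤ m then (-1 : ℤ) ^ j * (#S).choose j * (Fintype.card α - #S).choose (m - j)
        else 0 := by
  rw [← sum_fiberwise_of_maps_to (g := fun T => #(T ∩ S)) (t := range (#S + 1))
    fun T _ => mem_range_succ_iff.2 (card_le_card inter_subset_right)]
  refine sum_congr rfl fun j _ => ?_
  rw [sum_congr rfl fun T hT => by rw [(mem_filter.1 hT).2], sum_const, nsmul_eq_mul]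
  split_ifs with hj
  · rw [card_filter_powersetCard_card_inter S hj]
    push_cast
    ring
  · rw [filter_false_of_mem fun T hT => ?_, card_empty, Nat.cast_zero, zero_mul]
    have := card_le_card (inter_subset_left (s₁ := T) (s₂ := S))
    rw [(mem_powersetCard.1 hT).2] at this
    omega

theorem sum_signChar_dotProduct_wt_eq {n : ℕ} (u : Fin n → ZMod 2) (m : ℕ) :
    ∑ v with wt v = m, signChar (u ⬝ᵥ v) =
      ∑ j ∈ range (wt u + 1),
        if j ≤ m then (-1 : ℤ) ^ j * (wt u).choose j * (n - wt u).choose (m - j) else 0 := by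
  have krawtchouk := sum_powersetCard_neg_one_pow_card_inter (α := Fin n) {i | u i ≠ 0} m
  rw [Fintype.card_fin] at krawtchouk
  rw [wt, ← krawtchouk]
  refine sum_nbij' (fun v => ({i | v i ≠ 0} : Finset (Fin n))) (fun T i => if i ∈ T then 1 else 0)
    ?_ ?_ ?_ ?_ ?_
  · intro v hv
    simpa [wt] using hv
  · intro T hT
    simp_all [wt]
  · intro v _
    ext i
    simp only [mem_filter, mem_univ, true_and, ite_not]
    generalize v i = x
    fin_cases x <;> rfl
  · intro T _
    ext i
    by_cases i ∈ T <;> simp [*]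
  · intro v _
    exact signChar_dotProduct u v

theorem sum_range_card_filter_wt_eq_nsmul {M : Type*} [AddCommMonoid M] {n : ℕ}
    (E : Finset (Fin n → ZMod 2)) (f : ℕ → M) :
    ∑ i ∈ range (n + 1), #{u ∈ E | wt u = i} • f i = ∑ u ∈ E, f (wt u) := by
  rw [← sum_fiberwise_of_maps_to (g := wt) (t := range (n + 1))
    fun u _ => mem_range_succ_iff.2 ((card_filter_le _ _).trans_eq (card_fin n))]
  exact sum_congr rfl fun i _ => by
    rw [sum_congr rfl fun u hu => by rw [(mem_filter.1 hu).2], sum_const]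

theorem Submodule.exists_mem_eq_add_iff_add_mem {M : Type*} [AddCommGroup M] [Module (ZMod 2) M]
    {A : Submodule (ZMod 2) M} {v a : M} : (∃ c ∈ A, v = c + a) ↔ v + a ∈ A :=
  ⟨fun ⟨c, hc, hv⟩ => by rwa [← ZModModule.sub_eq_add, hv, add_sub_cancel_right],
    fun h => ⟨v + a, h, by rw [add_assoc, ZModModule.add_self, add_zero]⟩⟩

theorem eq_two_zpow_mul_of_two_pow_mul_eq {k n : ℕ} (hkn : k ≤ n) {x y : ℚ}
    (h : 2 ^ (n - k) * x = 2 * y) : x = 2 ^ ((k : ℤ) - n + 1) * y := by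
  rw [zpow_add₀ two_ne_zero, zpow_one, mul_assoc, ← h, ← mul_assoc, ← zpow_natCast,
    ← zpow_add₀ two_ne_zero, Nat.cast_sub hkn]
  ring_nf
  exact (one_mul x).symm

theorem balanced_difference_identity_general (n Kdim : ℕ)
    (A : Submodule (ZMod 2) (Fin n → ZMod 2))
    (hK : Module.finrank (ZMod 2) A = Kdim)
    (a : Fin n → ZMod 2)
    (B b : ℕ → ℕ)
    (hB : ∀ i, B i = {u | u ∈ dualSet A ∧ wt u = i}.ncard)
    (hb : ∀ i, b i = {u | u ∈ dualSet A ∧ (∑ j, u j * a j) = 0 ∧ wt u = i}.ncard)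
    (dbal BA : ℕ)
    (hdbal : dbal = {v | (∃ c ∈ A, v = c + a) ∧ wt v = n / 2}.ncard)
    (hBA : BA = {v | v ∈ A ∧ wt v = n / 2}.ncard) :
    (BA : ℚ) - (dbal : ℚ) =
      (2 : ℚ) ^ ((Kdim : ℤ) - (n : ℤ) + 1) *
        ∑ i ∈ Finset.range (n + 1), ((B i : ℚ) - (b i : ℚ)) * (Kw i n : ℚ) := by
  classical
  change ∀ i, b i = {u | u ∈ dualSet A ∧ u ⬝ᵥ a = 0 ∧ wt u = i}.ncard at hb
  simp only [← coe_filter_univ, Set.ncard_coe_finset, mem_dualSet_iff,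
    Submodule.exists_mem_eq_add_iff_add_mem] at hB hb hBA hdbal
  set E : Finset (Fin n → ZMod 2) := {u | u ∈ A.dualCode ∧ u ⬝ᵥ a ≠ 0}
  have hBb (i : ℕ) : (B i : ℤ) - b i = #{u ∈ E | wt u = i} := by
    rw [hB, hb, ← card_filter_add_card_filter_not (fun u => u ⬝ᵥ a = 0)]
    simp only [filter_filter, E, Nat.cast_add, ne_eq, and_assoc, and_comm, and_left_comm,
      add_sub_cancel_left]
  have hsum : ∑ i ∈ range (n + 1), ((B i : ℤ) - b i) * Kw i n =
      ∑ u ∈ E, ∑ v with wt v = n / 2, signChar (u ⬝ᵥ v) := by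
    simp only [hBb, ← nsmul_eq_mul, sum_range_card_filter_wt_eq_nsmul]
    exact sum_congr rfl fun u _ => (sum_signChar_dotProduct_wt_eq u (n / 2)).symm
  have key := two_pow_mul_card_filter_sub_card_filter A a {v | wt v = n / 2}
  rw [← hsum] at key
  simp only [filter_filter, and_comm (a := wt _ = n / 2), ← hBA, ← hdbal, Fintype.card_fin,
    hK] at key
  have hKn : Kdim ≤ n := hK ▸ (Submodule.finrank_le A).trans_eq (Module.finrank_fin_fun _)
  exact eq_two_zpow_mul_of_two_pow_mul_eq hKn (by exact_mod_cast key)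

theorem balanced_difference_identity (n Kdim : ℕ) (hn : Even n) (hpos : 0 < n)
    (A : Submodule (ZMod 2) (Fin n → ZMod 2))
    (hK : Module.finrank (ZMod 2) A = Kdim)
    (a : Fin n → ZMod 2) (ha : a ∉ A)
    (B b : ℕ → ℕ)
    (hB : ∀ i, B i = {u | u ∈ dualSet A ∧ wt u = i}.ncard)
    (hb : ∀ i, b i = {u | u ∈ dualSet A ∧ (∑ j, u j * a j) = 0 ∧ wt u = i}.ncard)
    (dbal BA : ℕ)
    (hdbal : dbal = {v | (∃ c ∈ A, v = c + a) ∧ wt v = n / 2}.ncard)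
    (hBA : BA = {v | v ∈ A ∧ wt v = n / 2}.ncard) :
    (BA : ℚ) - (dbal : ℚ) =
      (2 : ℚ) ^ ((Kdim : ℤ) - (n : ℤ) + 1) *
        ∑ i ∈ Finset.range (n + 1), ((B i : ℚ) - (b i : ℚ)) * (Kw i n : ℚ) :=
  balanced_difference_identity_general n Kdim A hK a B b hB hb dbal BA hdbal hBA
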